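/- arXiv:2408.08272 — 4 statements merged into one kernel-verified Lean document; each statement's English description precedes it below -/
import Mathlib

section
/- For every real γ with 0 < γ ≤ 1, the optimistic Stackelberg value of the column player in the game G2 equals 2, i.e., StackVal_2(G2) = 2; moreover it is attained when the column player commits to the pure strategy D, to which the row player's unique best response is B. -/
/-!
Statement 1: For every real γ with 0 < γ ≤ 1, the optimistic Stackelberg value of the
column player in the game G2 equals 2, attained when the column player commits to the
pure strategy D, to which the row player's unique best response is B.

Row actions: `0 = A`, `1 = B`.  Column actions: `0 = C`, `1 = D`.
-/

/-- A mixed strategy on a finite set: nonnegative and summing to 1. -/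
def IsMixed {S : Type*} [Fintype S] (p : S → ℝ) : Prop :=
  (∀ s, 0 ≤ p s) ∧ ∑ s, p s = 1

/-- Player 1's utilities in game `G2`. -/
noncomputable def U1G2 : Fin 2 → Fin 2 → ℝ := ![![1, 0], ![9 / 10, 1 / 10]]

/-- Player 2's utilities in game `G2`. -/
noncomputable def U2G2 (γ : ℝ) : Fin 2 → Fin 2 → ℝ := ![![1, -32 / γ], ![0, 2]]

/-- Expected utility of utility matrix `U` when the row player plays the pure action `x`
and the column player plays the mixed strategy `y`. -/
noncomputable def evalRow (U : Fin 2 → Fin 2 → ℝ) (x : Fin 2) (y : Fin 2 → ℝ) : ℝ :=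
  ∑ b, y b * U x b

/-- The row player's pure best responses to the mixed column strategy `y`. -/
def rowBR (U1 : Fin 2 → Fin 2 → ℝ) (y : Fin 2 → ℝ) : Set (Fin 2) :=
  {x | ∀ x', evalRow U1 x' y ≤ evalRow U1 x y}

/-- The optimistic Stackelberg value of the column player: the supremum over mixed column
strategies `y` of the maximum of the column player's utility over the row player's pure
best responses to `y` (ties broken in the column player's favor). -/
noncomputable def stackVal2 (U1 U2 : Fin 2 → Fin 2 → ℝ) : ℝ :=
  sSup {v | ∃ y, IsMixed y ∧
    IsGreatest {u | ∃ x ∈ rowBR U1 y, u = evalRow U2 x y} v}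

/-- The pure column strategy `D`. -/
noncomputable def pureD : Fin 2 → ℝ := ![0, 1]

theorem stackVal2_G2_eq_two (γ : ℝ) (hγ0 : 0 < γ) (hγ1 : γ ≤ 1) :
    stackVal2 U1G2 (U2G2 γ) = 2 ∧
    rowBR U1G2 pureD = {(1 : Fin 2)} ∧
    IsGreatest {u | ∃ x ∈ rowBR U1G2 pureD, u = evalRow (U2G2 γ) x pureD} 2 := by
  have hBR : rowBR U1G2 pureD = {(1 : Fin 2)} := by
    ext x
    fin_cases x
    · simp only [rowBR, Set.mem_setOf_eq, Set.mem_singleton_iff]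
      constructor
      · intro h
        have := h 1
        simp [evalRow, Fin.sum_univ_two, U1G2, pureD] at this
        norm_num at this
      · intro h; exact absurd h (by decide)
    · simp only [rowBR, Set.mem_setOf_eq, Set.mem_singleton_iff]
      constructor
      · intro _; rfl
      · intro _ x'
        fin_cases x' <;> simp [evalRow, Fin.sum_univ_two, U1G2, pureD] <;> norm_num
  have hval : evalRow (U2G2 γ) 1 pureD = 2 := by
    simp [evalRow, Fin.sum_univ_two, U2G2, pureD]
  have hGreat : IsGreatest {u | ∃ x ∈ rowBR U1G2 pureD, u = evalRow (U2G2 γ) x pureD} 2 := by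
    constructor
    · exact ⟨1, by rw [hBR]; rfl, hval.symm⟩
    · rintro u ⟨x, hx, rfl⟩
      rw [hBR] at hx
      rw [Set.mem_singleton_iff] at hx
      subst hx
      rw [hval]
  refine ⟨?_, hBR, hGreat⟩
  have hub : ∀ v ∈ {v | ∃ y, IsMixed y ∧
      IsGreatest {u | ∃ x ∈ rowBR U1G2 y, u = evalRow (U2G2 γ) x y} v}, v ≤ 2 := by
    rintro v ⟨y, ⟨hpos, hsum⟩, ⟨⟨x, hx, rfl⟩, _⟩⟩
    have h0 := hpos 0
    have h1 := hpos 1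
    have hs : y 0 + y 1 = 1 := by simpa [Fin.sum_univ_two] using hsum
    have hγ : 0 < 32 / γ := by positivity
    fin_cases x
    · simp only [evalRow, Fin.sum_univ_two, U2G2]
      norm_num
      have hneg : -32 / γ ≤ 0 := div_nonpos_of_nonpos_of_nonneg (by norm_num) hγ0.le
      nlinarith [mul_nonpos_iff.mpr (Or.inr ⟨hneg, h1⟩)]
    · simp only [evalRow, Fin.sum_univ_two, U2G2]
      norm_num
      nlinarith
  have hmem : (2 : ℝ) ∈ {v | ∃ y, IsMixed y ∧
      IsGreatest {u | ∃ x ∈ rowBR U1G2 y, u = evalRow (U2G2 γ) x y} v} := by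
    exact ⟨pureD, ⟨by intro s; fin_cases s <;> simp [pureD],
      by simp [Fin.sum_univ_two, pureD]⟩, hGreat⟩
  exact IsGreatest.csSup_eq ⟨hmem, hub⟩
end

section
/- Let A1 and A2 be nonempty finite sets, let U : A1 × A2 → ℝ, and let y0 ∈ A2. Suppose y0 is not weakly dominated by any mixed strategy over the remaining actions: for every mixed strategy η over A2 \ {y0} there exists some x ∈ A1 with Σ_{y ≠ y0} η(y)·U(x,y) < U(x,y0). Then there exist a mixed strategy x̄ over A1 and a real c > 0 such that for every y ∈ A2 with y ≠ y0, Σ_{x ∈ A1} x̄(x)·U(x,y0) ≥ Σ_{x ∈ A1} x̄(x)·U(x,y) + c; that is, y0 is the strict best response to x̄ with margin at least c. -/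
open Matrix

theorem Matrix.exists_isSaddlePointOn_stdSimplex {m n : Type*} [Fintype m] [Fintype n]
    [Nonempty m] [Nonempty n] (M : Matrix m n ℝ) :
    ∃ p ∈ stdSimplex ℝ m, ∃ q ∈ stdSimplex ℝ n,
      IsSaddlePointOn (stdSimplex ℝ m) (stdSimplex ℝ n) (fun u v ↦ u ⬝ᵥ M *ᵥ v) p q := by
  refine Sion.exists_isSaddlePointOn (Set.nonempty_coe_sort.1 inferInstance)
    (convex_stdSimplex ℝ m) (isCompact_stdSimplex ℝ m) (fun q _ ↦ ?_) (fun q _ ↦ ?_)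
    (convex_stdSimplex ℝ n) (Set.nonempty_coe_sort.1 inferInstance) (isCompact_stdSimplex ℝ n)
    (fun p _ ↦ ?_) (fun p _ ↦ ?_)
  · exact (by fun_prop : Continuous (· ⬝ᵥ M *ᵥ q)).lowerSemicontinuous.lowerSemicontinuousOn _
  · exact (((dotProductBilin ℝ ℝ).flip (M *ᵥ q)).convexOn (convex_stdSimplex ℝ m)).quasiconvexOn
  · exact (by fun_prop : Continuous (p ⬝ᵥ M *ᵥ ·)).upperSemicontinuous.upperSemicontinuousOn _
  · exact (((dotProductBilin ℝ ℝ p).comp M.mulVecLin).concaveOn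
      (convex_stdSimplex ℝ n)).quasiconcaveOn

theorem Matrix.exists_stdSimplex_vecMul_le_mulVec {m n : Type*} [Fintype m] [Fintype n]
    [Nonempty m] [Nonempty n] (M : Matrix m n ℝ) :
    ∃ p ∈ stdSimplex ℝ m, ∃ q ∈ stdSimplex ℝ n, ∀ i j, (p ᵥ* M) j ≤ (M *ᵥ q) i := by
  classical
  obtain ⟨p, hp, q, hq, hpq⟩ := M.exists_isSaddlePointOn_stdSimplex
  refine ⟨p, hp, q, hq, fun i j ↦ ?_⟩
  have h := hpq _ (single_mem_stdSimplex ℝ i) _ (single_mem_stdSimplex ℝ j)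
  simp only at h
  rwa [dotProduct_mulVec, dotProduct_single_one, single_one_dotProduct] at h

theorem Finset.sum_dite_mem_mul {α R : Type*} [DecidableEq α] [NonUnitalNonAssocSemiring R]
    (s : Finset α) (p : s → R) (g : α → R) :
    ∑ y ∈ s, (if h : y ∈ s then p ⟨y, h⟩ else 0) * g y = ∑ y : s, p y * g y := by
  simp only [dite_mul, zero_mul]
  exact Finset.sum_dite_of_true (fun _ h ↦ h) _ _

theorem strict_best_response_of_not_weakly_dominated_general
    {A1 A2 : Type*} [Fintype A1] [Fintype A2] [Nonempty A1] [DecidableEq A2]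
    (U : A1 → A2 → ℝ) (y0 : A2)
    (hnd : ∀ η : A2 → ℝ, (∀ y, 0 ≤ η y) → (∑ y ∈ Finset.univ.erase y0, η y) = 1 →
      ∃ x : A1, (∑ y ∈ Finset.univ.erase y0, η y * U x y) < U x y0) :
    ∃ (xb : A1 → ℝ) (c : ℝ), IsMixed xb ∧ 0 < c ∧
      ∀ y : A2, y ≠ y0 →
        (∑ a, xb a * U a y0) ≥ (∑ a, xb a * U a y) + c := by
  set s := Finset.univ.erase y0
  rcases isEmpty_or_nonempty s with hs | hs
  · obtain ⟨xb, hxb⟩ : (stdSimplex ℝ A1).Nonempty := Set.nonempty_coe_sort.1 inferInstance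
    exact ⟨xb, 1, hxb, one_pos, fun y hy ↦ (hs.false ⟨y, by simpa [s] using hy⟩).elim⟩
  set M : Matrix s A1 ℝ := .of fun y x ↦ U x y0 - U x y
  obtain ⟨p, hp, q, hq, hpq⟩ := M.exists_stdSimplex_vecMul_le_mulVec
  set η : A2 → ℝ := fun y ↦ if h : y ∈ s then p ⟨y, h⟩ else 0
  have hη (g : A2 → ℝ) : ∑ y ∈ s, η y * g y = ∑ y : s, p y * g y :=
    Finset.sum_dite_mem_mul s p g
  have hη_sum : ∑ y ∈ s, η y = 1 := by simpa only [Pi.one_apply, mul_one, hp.2] using hη 1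
  obtain ⟨x, hx⟩ := hnd η (fun y ↦ by unfold η; split_ifs; exacts [hp.1 _, le_rfl]) hη_sum
  have hvecMul : (p ᵥ* M) x = U x y0 - ∑ y ∈ s, η y * U x y := by
    simp only [M, vecMul, dotProduct, of_apply, mul_sub, Finset.sum_sub_distrib,
      ← Finset.sum_mul, hp.2, one_mul, hη]
  have hmulVec (y : s) : (M *ᵥ q) y = ∑ a, q a * U a y0 - ∑ a, q a * U a y := by
    simp only [M, mulVec, dotProduct, of_apply, sub_mul, Finset.sum_sub_distrib,
      mul_comm (q _)]
  refine ⟨q, (p ᵥ* M) x, hq, by rwa [hvecMul, sub_pos], fun y hy ↦ ?_⟩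
  have hy : y ∈ s := by simpa [s] using hy
  linarith [hpq ⟨y, hy⟩ x, hmulVec ⟨y, hy⟩]

theorem strict_best_response_of_not_weakly_dominated
    {A1 A2 : Type*} [Fintype A1] [Fintype A2] [Nonempty A1] [Nonempty A2] [DecidableEq A2]
    (U : A1 → A2 → ℝ) (y0 : A2)
    (hnd : ∀ η : A2 → ℝ, (∀ y, 0 ≤ η y) → (∑ y ∈ Finset.univ.erase y0, η y) = 1 →
      ∃ x : A1, (∑ y ∈ Finset.univ.erase y0, η y * U x y) < U x y0) :
    ∃ (xb : A1 → ℝ) (c : ℝ), IsMixed xb ∧ 0 < c ∧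
      ∀ y : A2, y ≠ y0 →
        (∑ a, xb a * U a y0) ≥ (∑ a, xb a * U a y) + c :=
  strict_best_response_of_not_weakly_dominated_general U y0 hnd
end

section
/- Let A1, A2 be nonempty finite sets, U1, U2 : A1 × A2 → ℝ, x̄ a mixed strategy over A1, y0 ∈ A2, and c > 0 such that U2(x̄, y0) ≥ U2(x̄, y) + c for every y ≠ y0. Set M = U1(x̄, y0) − min_{y ∈ A2} U1(x̄, y). Then for any finite sequence y^1, …, y^T of mixed strategies over A2 satisfying Σ_{t=1}^T (U2(x̄, y0) − U2(x̄, y^t)) ≤ R for some R ≥ 0, the leader's cumulative utility satisfies Σ_{t=1}^T U1(x̄, y^t) ≥ T·U1(x̄, y0) − (M/c)·R. -/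
open Finset

theorem sum_sum_mul_mul_eq_sum_mul_sum {R α β : Type*} [CommSemiring R]
    [Fintype α] [Fintype β] (x : α → R) (y : β → R) (U : α → β → R) :
    ∑ a, ∑ b, x a * y b * U a b = ∑ b, y b * ∑ a, x a * U a b := by
  rw [sum_comm]
  refine sum_congr rfl fun b _ => ?_
  rw [mul_sum]
  exact sum_congr rfl fun a _ => by ring

theorem le_div_mul_of_le_of_le {a b M c : ℝ} (hc : 0 < c) (hM : 0 ≤ M) (ha : a ≤ M)
    (hb : c ≤ b) : a ≤ M / c * b :=
  calc a ≤ M := ha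
    _ = M / c * c := (div_mul_cancel₀ M hc.ne').symm
    _ ≤ M / c * b := mul_le_mul_of_nonneg_left hb (div_nonneg hM hc.le)

namespace IsMixed

variable {ι : Type*} [Fintype ι] {p : ι → ℝ}

theorem sub_sum_mul_eq (hp : IsMixed p) (f : ι → ℝ) (i : ι) :
    f i - ∑ j, p j * f j = ∑ j, p j * (f i - f j) := by
  simp only [mul_sub, sum_sub_distrib, ← sum_mul, hp.2, one_mul]

theorem sub_sum_mul_le (hp : IsMixed p) {f g : ι → ℝ} {i : ι} {M c : ℝ} (hc : 0 < c)
    (hf : ∀ j, f i - f j ≤ M) (hg : ∀ j, j ≠ i → g j + c ≤ g i) :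
    f i - ∑ j, p j * f j ≤ M / c * (g i - ∑ j, p j * g j) := by
  have hM : 0 ≤ M := by simpa using hf i
  rw [hp.sub_sum_mul_eq, hp.sub_sum_mul_eq, mul_sum]
  refine sum_le_sum fun j _ => ?_
  obtain rfl | hji := eq_or_ne j i
  · simp
  · rw [mul_left_comm]
    exact mul_le_mul_of_nonneg_left
      (le_div_mul_of_le_of_le hc hM (hf j) (by linarith [hg j hji])) (hp.1 j)

end IsMixed

theorem card_mul_sub_sum_sum_le {ι τ : Type*} [Fintype ι] [Fintype τ]
    {ps : τ → ι → ℝ} (hps : ∀ t, IsMixed (ps t)) {f g : ι → ℝ} {i : ι} {M c : ℝ}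
    (hc : 0 < c) (hf : ∀ j, f i - f j ≤ M) (hg : ∀ j, j ≠ i → g j + c ≤ g i) :
    Fintype.card τ * f i - ∑ t, ∑ j, ps t j * f j ≤
      M / c * ∑ t, (g i - ∑ j, ps t j * g j) := by
  rw [mul_sum, ← nsmul_eq_mul, ← card_univ, ← sum_const, ← sum_sub_distrib]
  exact sum_le_sum fun t _ => (hps t).sub_sum_mul_le hc hf hg

theorem sub_le_sub_ciInf {ι : Type*} [Finite ι] (f : ι → ℝ) (i j : ι) :
    f i - f j ≤ f i - ⨅ k, f k :=
  sub_le_sub_left (ciInf_le (Set.finite_range f).bddBelow j) _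

theorem leader_cumulative_utility_bound_general
    {A1 A2 : Type*} [Fintype A1] [Fintype A2]
    (U1 U2 : A1 → A2 → ℝ) (xb : A1 → ℝ) (y0 : A2) (c : ℝ)
    (hc : 0 < c)
    (hstrict : ∀ y : A2, y ≠ y0 → (∑ a, xb a * U2 a y0) ≥ (∑ a, xb a * U2 a y) + c)
    (T : ℕ) (ys : Fin T → A2 → ℝ) (hys : ∀ t, IsMixed (ys t))
    (R : ℝ)
    (hreg : (∑ t, ((∑ a, xb a * U2 a y0) - (∑ a, ∑ b, xb a * ys t b * U2 a b))) ≤ R) :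
    (∑ t, ∑ a, ∑ b, xb a * ys t b * U1 a b) ≥
      (T : ℝ) * (∑ a, xb a * U1 a y0) -
        (((∑ a, xb a * U1 a y0) - ⨅ y : A2, ∑ a, xb a * U1 a y) / c) * R := by
  set f : A2 → ℝ := fun y => ∑ a, xb a * U1 a y
  set g : A2 → ℝ := fun y => ∑ a, xb a * U2 a y
  set M := f y0 - ⨅ y, f y
  simp only [sum_sum_mul_mul_eq_sum_mul_sum] at hreg ⊢
  have hf : ∀ y, f y0 - f y ≤ M := sub_le_sub_ciInf f y0
  have hloss := card_mul_sub_sum_sum_le hys hc hf hstrict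
  have hM : 0 ≤ M := by simpa using hf y0
  rw [Fintype.card_fin] at hloss
  linarith [mul_le_mul_of_nonneg_left hreg (div_nonneg hM hc.le)]

theorem leader_cumulative_utility_bound
    {A1 A2 : Type*} [Fintype A1] [Fintype A2] [Nonempty A1] [Nonempty A2]
    (U1 U2 : A1 → A2 → ℝ) (xb : A1 → ℝ) (y0 : A2) (c : ℝ)
    (hxb : IsMixed xb) (hc : 0 < c)
    (hstrict : ∀ y : A2, y ≠ y0 → (∑ a, xb a * U2 a y0) ≥ (∑ a, xb a * U2 a y) + c)
    (T : ℕ) (ys : Fin T → A2 → ℝ) (hys : ∀ t, IsMixed (ys t))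
    (R : ℝ) (hR : 0 ≤ R)
    (hreg : (∑ t, ((∑ a, xb a * U2 a y0) - (∑ a, ∑ b, xb a * ys t b * U2 a b))) ≤ R) :
    (∑ t, ∑ a, ∑ b, xb a * ys t b * U1 a b) ≥
      (T : ℝ) * (∑ a, xb a * U1 a y0) -
        (((∑ a, xb a * U1 a y0) - ⨅ y : A2, ∑ a, xb a * U1 a y) / c) * R :=
  leader_cumulative_utility_bound_general U1 U2 xb y0 c hc hstrict T ys hys R hreg
end

section
/- Let p* ∈ [0,1), set γ = (1−p*)/(1+p*), and let p ∈ [0, p*]. Let μ11, μ12, μ21, μ22 be probability distributions on the four action profiles {A,B}×{C,D}, and define CSP1 = ((1+p)/2)·μ11 + ((1−p)/2)·μ12, CSP1' = ((1−p)/2)·μ11 + ((1+p)/2)·μ12, and CSP2 = ((1−p)/2)·μ21 + ((1+p)/2)·μ22. If CSP1({(A,D)}) ≤ γ/8, CSP1({(B,D)}) ≤ γ/8, and CSP2({(B,D)}) ≥ 1/2, then E_{CSP1'}[U1 in G2] − E_{CSP2}[U1 in G2] ≥ 1/8 > 0; i.e., the row player strictly gains in game G2 by switching from the strategy distribution CSP2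 to the 'pretend-the-game-is-G1' distribution CSP1'. -/
/-!
Statement 14 (core deviation argument of Theorem 3.2): with `γ = (1−p*)/(1+p*)` and
`p ∈ [0, p*]`, if the mixtures `CSP1 = ((1+p)/2)·μ11 + ((1−p)/2)·μ12`,
`CSP1' = ((1−p)/2)·μ11 + ((1+p)/2)·μ12`, `CSP2 = ((1−p)/2)·μ21 + ((1+p)/2)·μ22`
satisfy `CSP1(A,D) ≤ γ/8`, `CSP1(B,D) ≤ γ/8`, and `CSP2(B,D) ≥ 1/2`, then the row
player strictly gains (by at least `1/8`) in game `G2` by switching from `CSP2` to the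
"pretend-the-game-is-G1" distribution `CSP1'`.

Row actions: `0 = A`, `1 = B`.  Column actions: `0 = C`, `1 = D`.
-/

/-- A probability distribution on a finite set. -/
def IsDist {S : Type*} [Fintype S] (μ : S → ℝ) : Prop :=
  (∀ s, 0 ≤ μ s) ∧ ∑ s, μ s = 1

/-- Expected utility of the payoff matrix `U` under the correlated strategy profile `μ`. -/
noncomputable def expU (μ : Fin 2 × Fin 2 → ℝ) (U : Fin 2 → Fin 2 → ℝ) : ℝ :=
  ∑ p, μ p * U p.1 p.2

theorem core_deviation_gain (pstar γ p : ℝ)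
    (hps0 : 0 ≤ pstar) (hps1 : pstar < 1)
    (hγ : γ = (1 - pstar) / (1 + pstar))
    (hp0 : 0 ≤ p) (hpp : p ≤ pstar)
    (μ11 μ12 μ21 μ22 : Fin 2 × Fin 2 → ℝ)
    (h11 : IsDist μ11) (h12 : IsDist μ12) (h21 : IsDist μ21) (h22 : IsDist μ22)
    (CSP1 CSP1' CSP2 : Fin 2 × Fin 2 → ℝ)
    (hC1 : CSP1 = fun s => (1 + p) / 2 * μ11 s + (1 - p) / 2 * μ12 s)
    (hC1' : CSP1' = fun s => (1 - p) / 2 * μ11 s + (1 + p) / 2 * μ12 s)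
    (hC2 : CSP2 = fun s => (1 - p) / 2 * μ21 s + (1 + p) / 2 * μ22 s)
    (hAD : CSP1 (0, 1) ≤ γ / 8) (hBD : CSP1 (1, 1) ≤ γ / 8)
    (hC2BD : CSP2 (1, 1) ≥ 1 / 2) :
    expU CSP1' U1G2 - expU CSP2 U1G2 ≥ 1 / 8 ∧
    expU CSP1' U1G2 - expU CSP2 U1G2 > 0 := by

  have hp1 : p < 1 := lt_of_le_of_lt hpp hps1
  have hps1' : (0:ℝ) < 1 + pstar := by linarith
  have hγ0 : 0 < γ := by
    rw [hγ]; apply div_pos <;> linarith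
  have hγp : γ * (1 + p) ≤ 1 - p := by
    have h1 : γ * (1 + pstar) = 1 - pstar := by
      rw [hγ]; field_simp
    have hγ1 : γ ≤ 1 := by nlinarith
    nlinarith
  have hγ1 : γ ≤ 1 := by nlinarith
  -- key pointwise bound γ * CSP1' s ≤ CSP1 s
  have key : ∀ s, γ * CSP1' s ≤ CSP1 s := by
    intro s
    have m1 := h11.1 s
    have m2 := h12.1 s
    rw [hC1, hC1']
    simp only
    nlinarith [mul_nonneg hγ0.le m1, mul_nonneg hγ0.le m2]
  have hb : CSP1' (0, 1) ≤ 1 / 8 := by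
    have := le_trans (key (0,1)) hAD
    nlinarith
  have hd : CSP1' (1, 1) ≤ 1 / 8 := by
    have := le_trans (key (1,1)) hBD
    nlinarith
  -- CSP1' is a distribution
  have hc1'nn : ∀ s, 0 ≤ CSP1' s := by
    intro s; rw [hC1']; have := h11.1 s; have := h12.1 s
    simp only; nlinarith
  have hc1'sum : ∑ s, CSP1' s = 1 := by
    rw [hC1']
    rw [Finset.sum_add_distrib, ← Finset.mul_sum, ← Finset.mul_sum, h11.2, h12.2]
    ring
  have hc2nn : ∀ s, 0 ≤ CSP2 s := by
    intro s; rw [hC2]; have := h21.1 s; have := h22.1 s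
    simp only; nlinarith
  have hc2sum : ∑ s, CSP2 s = 1 := by
    rw [hC2]
    rw [Finset.sum_add_distrib, ← Finset.mul_sum, ← Finset.mul_sum, h21.2, h22.2]
    ring
  have esum1 : ∑ s, CSP1' s = CSP1' (0,0) + CSP1' (0,1) + CSP1' (1,0) + CSP1' (1,1) := by
    rw [Fintype.sum_prod_type]
    simp [Fin.sum_univ_two]
    ring
  have esum2 : ∑ s, CSP2 s = CSP2 (0,0) + CSP2 (0,1) + CSP2 (1,0) + CSP2 (1,1) := by
    rw [Fintype.sum_prod_type]
    simp [Fin.sum_univ_two]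
    ring
  have e1 : expU CSP1' U1G2 = CSP1' (0,0) * 1 + CSP1' (0,1) * 0
      + CSP1' (1,0) * (9/10) + CSP1' (1,1) * (1/10) := by
    rw [expU, Fintype.sum_prod_type]
    simp [Fin.sum_univ_two, U1G2]
    ring
  have e2 : expU CSP2 U1G2 = CSP2 (0,0) * 1 + CSP2 (0,1) * 0
      + CSP2 (1,0) * (9/10) + CSP2 (1,1) * (1/10) := by
    rw [expU, Fintype.sum_prod_type]
    simp [Fin.sum_univ_two, U1G2]
    ring
  rw [esum1] at hc1'sum
  rw [esum2] at hc2sum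
  have a0 := hc1'nn (0,0); have c0 := hc1'nn (1,0)
  have e0 := hc2nn (0,0); have f0 := hc2nn (0,1); have g0 := hc2nn (1,0)
  constructor
  · rw [e1, e2]; linarith
  · rw [e1, e2]; linarith
end
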